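/- Let A be a real m×n matrix, λ > 0, ν ∈ (0,1], and suppose s* = (AᵀA)^ν w for some w ∈ ℝⁿ, where (AᵀA)^ν is defined via the spectral decomposition of the positive semidefinite matrix AᵀA. Then ‖λ²(AᵀA + λ²I)⁻¹ s*‖ ≤ λ^{2ν} ‖w‖. -/

import Mathlib

/-!
In the functional calculus of `S = AᵀA ≥ 0`, the vector `λ²(S + λ²)⁻¹ s*` is `g(S) w` with
`g(μ) = λ² μ^ν / (μ + λ²)`, so its norm is at most `sup_{μ ∈ σ(S)} |g(μ)| · ‖w‖`. Weighted AM-GM gives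
`μ^ν (λ²)^(1-ν) ≤ ν μ + (1-ν) λ² ≤ μ + λ²`, i.e. `g(μ) ≤ λ^(2ν)`.
-/

open Matrix

theorem mul_rpow_div_add_le_rpow {a x ν : ℝ} (ha : 0 < a) (hx : 0 ≤ x) (hν0 : 0 ≤ ν)
    (hν1 : ν ≤ 1) : a * x ^ ν / (x + a) ≤ a ^ ν := by
  have amgm : x ^ ν * a ^ (1 - ν) ≤ x + a := by
    have := Real.geom_mean_le_arith_mean2_weighted hν0 (sub_nonneg.2 hν1) hx ha.le (by ring)
    nlinarith
  rw [div_le_iff₀ (by positivity)]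
  calc a * x ^ ν = a ^ ν * (x ^ ν * a ^ (1 - ν)) := by
        rw [mul_left_comm, ← Real.rpow_add ha, add_sub_cancel, Real.rpow_one, mul_comm]
    _ ≤ a ^ ν * (x + a) := by gcongr

namespace Matrix

open scoped ComplexOrder MatrixOrder

variable {ι 𝕜 : Type*} [Fintype ι] [DecidableEq ι] [RCLike 𝕜]

theorem continuousOn_real_spectrum (S : Matrix ι ι 𝕜) (f : ℝ → ℝ) :
    ContinuousOn f (spectrum ℝ S) :=
  S.finite_real_spectrum.continuousOn f

theorem PosSemidef.nonneg_of_mem_spectrum {S : Matrix ι ι 𝕜} (hS : S.PosSemidef) {x : ℝ}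
    (hx : x ∈ spectrum ℝ S) : 0 ≤ x :=
  spectrum_nonneg_of_nonneg hS.nonneg hx

theorem PosSemidef.add_smul_one_inv_eq_cfc {S : Matrix ι ι 𝕜} (hS : S.PosSemidef) {c : ℝ}
    (hc : 0 < c) : (S + c • 1)⁻¹ = cfc (fun x ↦ (x + c)⁻¹) S := by
  have hspec : ∀ x ∈ spectrum ℝ S, x + c ≠ 0 := fun x hx ↦
    (add_pos_of_nonneg_of_pos (hS.nonneg_of_mem_spectrum hx) hc).ne'
  rw [nonsing_inv_eq_ringInverse, cfc_inv (· + c) S hspec, cfc_add_const c (fun x ↦ x) S,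
    cfc_id' ℝ S, Algebra.algebraMap_eq_smul_one]

theorem PosSemidef.smul_add_smul_one_inv_mul_cfc {S : Matrix ι ι 𝕜} (hS : S.PosSemidef)
    {c : ℝ} (hc : 0 < c) (f : ℝ → ℝ) :
    c • ((S + c • 1)⁻¹ * cfc f S) = cfc (fun x ↦ c * f x / (x + c)) S := by
  rw [hS.add_smul_one_inv_eq_cfc hc,
    ← cfc_mul _ f S (S.continuousOn_real_spectrum _) (S.continuousOn_real_spectrum _),
    ← cfc_smul c _ S (S.continuousOn_real_spectrum _)]
  exact cfc_congr fun x _ ↦ by simp only [smul_eq_mul]; ring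

open scoped Matrix.Norms.L2Operator in
theorem norm_toEuclideanLin_cfc_le (S : Matrix ι ι ℝ) {f : ℝ → ℝ} {C : ℝ} (hC : 0 ≤ C)
    (hf : ∀ x ∈ spectrum ℝ S, |f x| ≤ C) (v : EuclideanSpace ℝ ι) :
    ‖toEuclideanLin (cfc f S) v‖ ≤ C * ‖v‖ :=
  (l2_opNorm_mulVec (cfc f S) v).trans (by gcongr; exact norm_cfc_le hC hf)

end Matrix

theorem stmt_7 (m n : ℕ) (A : Matrix (Fin m) (Fin n) ℝ) (lam ν : ℝ)
    (hlam : 0 < lam) (hν : 0 < ν) (hν1 : ν ≤ 1)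
    (w sstar : EuclideanSpace ℝ (Fin n))
    (hsrc : sstar = Matrix.toEuclideanLin (cfc (fun x : ℝ => x ^ ν) (Aᵀ * A)) w) :
    ‖lam ^ 2 • Matrix.toEuclideanLin
        ((Aᵀ * A + lam ^ 2 • (1 : Matrix (Fin n) (Fin n) ℝ))⁻¹) sstar‖
      ≤ lam ^ (2 * ν) * ‖w‖ := by
  have hS : (Aᵀ * A).PosSemidef := by simpa using posSemidef_conjTranspose_mul_self A
  have hc : 0 < lam ^ 2 := by positivity
  have hsstar : lam ^ 2 • toEuclideanLin ((Aᵀ * A + lam ^ 2 • 1)⁻¹) sstar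
      = toEuclideanLin
          (lam ^ 2 • ((Aᵀ * A + lam ^ 2 • 1)⁻¹ * cfc (fun x : ℝ ↦ x ^ ν) (Aᵀ * A))) w := by
    simp [hsrc]
  rw [hsstar, hS.smul_add_smul_one_inv_mul_cfc hc]
  refine norm_toEuclideanLin_cfc_le _ (by positivity) (fun x hx ↦ ?_) w
  have hx0 : 0 ≤ x := hS.nonneg_of_mem_spectrum hx
  have hpow : lam ^ (2 * ν) = (lam ^ 2) ^ ν := by
    exact_mod_cast Real.rpow_natCast_mul hlam.le 2 ν
  rw [abs_of_nonneg (by positivity), hpow]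
  exact mul_rpow_div_add_le_rpow hc hx0 hν.le hν1
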